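/- For every nonzero integer m and every t ∈ ℝ, the single-layer logarithmic kernel acts diagonally on trigonometric monomials: −(1/(2π)) ∫₀^{2π} ln(4 sin²((t−ζ)/2)) e^{imζ} dζ = (1/|m|) e^{imt}. -/

import Mathlib

open MeasureTheory intervalIntegral Real Set Filter Topology

noncomputable def slG (u : ℝ) : ℝ := Real.log (4 * Real.sin (u/2) ^ 2)

lemma slG_periodic : Function.Periodic slG (2 * π) := by
  intro u
  unfold slG
  have : (u + 2*π)/2 = u/2 + π := by ring
  rw [this, Real.sin_add_pi]
  ring_nf

lemma slG_reflect (u : ℝ) : slG (2*π - u) = slG u := by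
  unfold slG
  have : (2*π - u)/2 = π - u/2 := by ring
  rw [this, Real.sin_pi_sub]

lemma slG_eq {u : ℝ} (h : Real.sin (u/2) ≠ 0) :
    slG u = Real.log 4 + 2 * Real.log (Real.sin (u/2)) := by
  unfold slG
  rw [Real.log_mul (by norm_num) (pow_ne_zero _ h), Real.log_pow]
  push_cast; ring

lemma log_intervalIntegrable01 : IntervalIntegrable Real.log volume 0 1 := by
  have h : IntervalIntegrable (fun u : ℝ => -Real.log u) volume 0 1 := by
    apply intervalIntegrable_deriv_of_nonneg (g := fun u => u - u * Real.log u)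
    · exact (continuous_id.sub Real.continuous_mul_log).continuousOn
    · intro x hx
      simp only [min_eq_left, max_eq_right, zero_le_one, mem_Ioo] at hx
      have := ((hasDerivAt_id x).sub (Real.hasDerivAt_mul_log (ne_of_gt hx.1)))
      refine this.congr_deriv ?_
      ring
    · intro x hx
      simp only [min_eq_left, max_eq_right, zero_le_one, mem_Ioo] at hx
      have := Real.log_nonpos hx.1.le hx.2.le
      linarith
  have h2 : Real.log = (-fun u : ℝ => -Real.log u) := by
    funext u; simp
  rw [h2]; exact h.neg

lemma log_intervalIntegrable {c : ℝ} (hc : 0 < c) : IntervalIntegrable Real.log volume 0 c := by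
  rcases le_total c 1 with h | h
  · exact log_intervalIntegrable01.mono_set (by rw [uIcc_of_le hc.le, uIcc_of_le zero_le_one]; exact Icc_subset_Icc le_rfl h)
  · exact log_intervalIntegrable01.trans (intervalIntegrable_log (by rw [uIcc_of_le h]; intro h0; exact absurd h0.1 (by norm_num)))

lemma slG_measurable : Measurable slG :=
  Real.measurable_log.comp (by fun_prop)

lemma slG_intervalIntegrable_pi : IntervalIntegrable slG volume 0 π := by
  rw [intervalIntegrable_iff_integrableOn_Ioc_of_le Real.pi_pos.le]
  have hdom : IntegrableOn (fun a : ℝ => Real.log 4 + 2 * (Real.log π - Real.log a)) (Ioc 0 π) := by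
    have h1 : IntervalIntegrable (fun a : ℝ => Real.log 4 + 2 * (Real.log π - Real.log a)) volume 0 π := by
      have h2 := (_root_.intervalIntegrable_const (c := Real.log 4 + 2 * Real.log π)).add
        ((log_intervalIntegrable Real.pi_pos).const_mul (-2))
      have heq : (fun a : ℝ => Real.log 4 + 2 * (Real.log π - Real.log a))
          = fun x => Real.log 4 + 2 * Real.log π + -2 * Real.log x := by funext x; ring
      rw [heq]; exact h2
    exact (intervalIntegrable_iff_integrableOn_Ioc_of_le Real.pi_pos.le).mp h1
  apply Integrable.mono' hdom (slG_measurable.aestronglyMeasurable.restrict)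
  · filter_upwards [ae_restrict_mem measurableSet_Ioc] with a ha
    obtain ⟨ha0, hapi⟩ := ha
    have hs0 : 0 < Real.sin (a/2) := Real.sin_pos_of_pos_of_lt_pi (by linarith)
      (by linarith [Real.pi_pos])
    have hs1 : Real.sin (a/2) ≤ 1 := Real.sin_le_one _
    have hjordan : a / π ≤ Real.sin (a/2) := by
      have := Real.mul_le_sin (x := a/2) (by linarith) (by linarith)
      calc a / π = 2/π * (a/2) := by field_simp
        _ ≤ _ := this
    rw [slG_eq hs0.ne', Real.norm_eq_abs]
    have hlog_le : Real.log (a/π) ≤ Real.log (Real.sin (a/2)) :=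
      Real.log_le_log (by positivity) hjordan
    rw [Real.log_div ha0.ne' Real.pi_pos.ne'] at hlog_le
    have hlogs : Real.log (Real.sin (a/2)) ≤ 0 := Real.log_nonpos hs0.le hs1
    have h4 : (0:ℝ) ≤ Real.log 4 := Real.log_nonneg (by norm_num)
    calc |Real.log 4 + 2 * Real.log (Real.sin (a/2))|
        ≤ |Real.log 4| + |2 * Real.log (Real.sin (a/2))| := abs_add_le _ _
      _ = Real.log 4 + 2 * (-Real.log (Real.sin (a/2))) := by
          rw [abs_of_nonneg h4, abs_mul, abs_of_nonpos hlogs]; norm_num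
      _ ≤ Real.log 4 + 2 * (Real.log π - Real.log a) := by linarith

lemma slG_intervalIntegrable : IntervalIntegrable slG volume 0 (2*π) := by
  apply slG_intervalIntegrable_pi.trans
  have h := slG_intervalIntegrable_pi.comp_sub_left (2*π)
  have heq : (fun x => slG (2*π - x)) = slG := by funext x; exact slG_reflect x
  rw [heq] at h
  have e1 : 2*π - 0 = 2*π := by ring
  have e2 : 2*π - π = π := by ring
  rw [e1, e2] at h
  exact h.symm

noncomputable def slP (n : ℕ) (u : ℝ) : ℝ :=
  ∑ k ∈ Finset.range n, (Real.cos (k*u) + Real.cos ((k+1)*u))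

lemma slP_identity (n : ℕ) (u : ℝ) :
    Real.cos (u/2) * Real.sin (n*u) = Real.sin (u/2) * slP n u := by
  induction n with
  | zero => simp [slP]
  | succ n ih =>
    have h1 := Real.sin_sub_sin ((n+1)*u) (n*u)
    have e1 : ((n+1)*u - n*u)/2 = u/2 := by ring
    rw [e1] at h1
    have h2 := Real.cos_add_cos ((n:ℝ)*u) ((n+1)*u)
    have e2 : ((n:ℝ)*u + (n+1)*u)/2 = ((n+1)*u + n*u)/2 := by ring
    have e3 : ((n:ℝ)*u - (n+1)*u)/2 = -(u/2) := by ring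
    rw [e2, e3, Real.cos_neg] at h2
    unfold slP at ih ⊢
    rw [Finset.sum_range_succ]
    push_cast at h1 h2 ih ⊢
    linear_combination ih + Real.cos (u/2) * h1 - Real.sin (u/2) * h2

lemma integral_cos_nat (k : ℕ) :
    ∫ u in (0:ℝ)..(2*π), Real.cos (k*u) = if k = 0 then 2*π else 0 := by
  rcases Nat.eq_zero_or_pos k with hk | hk
  · simp [hk]
  · have hkne : (k:ℝ) ≠ 0 := Nat.cast_ne_zero.mpr hk.ne'
    rw [if_neg hk.ne']
    rw [integral_comp_mul_left (fun x => Real.cos x) hkne]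
    have hs : Real.sin ((k:ℝ) * (2*π)) = 0 := by
      have := Real.sin_int_mul_pi (2*(k:ℤ))
      push_cast at this
      convert this using 2
      ring
    simp [integral_cos, hs]

lemma integral_slP (n : ℕ) (hn : 0 < n) :
    ∫ u in (0:ℝ)..(2*π), slP n u = 2*π := by
  unfold slP
  rw [intervalIntegral.integral_finset_sum]
  · have : ∀ k ∈ Finset.range n, (∫ u in (0:ℝ)..(2*π), (Real.cos (k*u) + Real.cos ((k+1)*u)))
        = if k = 0 then 2*π else 0 := by
      intro k _
      rw [intervalIntegral.integral_add (by apply Continuous.intervalIntegrable; fun_prop)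
        (by apply Continuous.intervalIntegrable; fun_prop)]
      rw [integral_cos_nat k]

      have h2 : ∫ u in (0:ℝ)..(2*π), Real.cos ((k+1:ℕ)*u) = 0 := by
        have := integral_cos_nat (k+1)
        rw [if_neg (Nat.succ_ne_zero k)] at this
        exact this
      push_cast at h2
      rw [h2, add_zero]
    rw [Finset.sum_congr rfl this]
    rw [Finset.sum_ite_eq' (Finset.range n) 0 (fun _ => 2*π)]
    simp [Finset.mem_range.mpr hn]
  · intro k _
    apply Continuous.intervalIntegrable; fun_prop

lemma slG_continuousAt {x : ℝ} (hx : Real.sin (x/2) ≠ 0) : ContinuousAt slG x := by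
  apply ContinuousAt.comp (Real.continuousAt_log ?_) (by fun_prop)
  positivity

lemma slF_tendsto_zero (n : ℕ) :
    Tendsto (fun u => slG u * Real.sin (n*u)) (𝓝[Icc 0 (2*π)] 0) (𝓝 0) := by
  set B : ℝ → ℝ := fun u => n*π*(Real.log 4 * Real.sin (u/2)
    + 2 * |Real.sin (u/2) * Real.log (Real.sin (u/2))|) with hB
  have hbound : ∀ᶠ u in 𝓝[Icc 0 (2*π)] 0, ‖slG u * Real.sin (n*u)‖ ≤ B u := by
    have h1 : ∀ᶠ u in 𝓝[Icc 0 (2*π)] 0, u ∈ Icc 0 (2*π) := eventually_mem_nhdsWithin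
    have h2 : ∀ᶠ u in 𝓝[Icc 0 (2*π)] 0, u ≤ π :=
      (eventually_le_nhds Real.pi_pos).filter_mono nhdsWithin_le_nhds
    filter_upwards [h1, h2] with u hu hupi
    have hu0 : 0 ≤ u := hu.1
    rcases eq_or_lt_of_le hu0 with rfl | hu0'
    · have : Real.sin ((n:ℝ)*0) = 0 := by norm_num
      rw [this]
      simp only [mul_zero, norm_zero, hB]
      norm_num
    · have hs0 : 0 < Real.sin (u/2) := Real.sin_pos_of_pos_of_lt_pi (by linarith)
        (by linarith [Real.pi_pos])
      set s := Real.sin (u/2) with hs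
      have hjordan : u ≤ π * s := by
        have := Real.mul_le_sin (x := u/2) (by linarith) (by linarith)
        have hπ := Real.pi_pos
        rw [hs]
        calc u = π * (2/π * (u/2)) := by field_simp
          _ ≤ π * Real.sin (u/2) := by
              apply mul_le_mul_of_nonneg_left this hπ.le
      have hb1 : |slG u| ≤ Real.log 4 + 2 * |Real.log s| := by
        rw [slG_eq hs0.ne']
        calc |Real.log 4 + 2 * Real.log s| ≤ |Real.log 4| + |2 * Real.log s| := abs_add_le _ _
          _ = Real.log 4 + 2 * |Real.log s| := by
              rw [abs_of_nonneg (Real.log_nonneg (by norm_num)), abs_mul]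
              norm_num
      have hb2 : |Real.sin (n*u)| ≤ n * (π * s) := by
        calc |Real.sin (n*u)| ≤ |(n:ℝ)*u| := Real.abs_sin_le_abs
          _ = n * u := by rw [abs_mul, abs_of_nonneg hu0, Nat.abs_cast]
          _ ≤ n * (π * s) := by
              apply mul_le_mul_of_nonneg_left hjordan (Nat.cast_nonneg n)
      rw [Real.norm_eq_abs, abs_mul]
      calc |slG u| * |Real.sin (n*u)|
          ≤ (Real.log 4 + 2 * |Real.log s|) * (n * (π * s)) := by
            apply mul_le_mul hb1 hb2 (abs_nonneg _) ?_
            have : (0:ℝ) ≤ |Real.log s| := abs_nonneg _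
            have : (0:ℝ) ≤ Real.log 4 := Real.log_nonneg (by norm_num)
            positivity
        _ = B u := by
            rw [hB]
            have : |s * Real.log s| = s * |Real.log s| := by
              rw [abs_mul, abs_of_nonneg hs0.le]
            dsimp only
            rw [this, ← hs]
            ring
  refine squeeze_zero_norm' hbound ?_
  · have hBcont : Continuous B := by
      apply continuous_const.mul
      apply Continuous.add
      · fun_prop
      · apply continuous_const.mul
        apply Continuous.abs
        exact Real.continuous_mul_log.comp (by fun_prop)
    have hB0 : B 0 = 0 := by simp [hB]
    have := hBcont.continuousAt (x := 0)
    rw [ContinuousAt, hB0] at this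
    exact this.mono_left nhdsWithin_le_nhds

lemma sin_nat_reflect (n : ℕ) (u : ℝ) : Real.sin ((n:ℝ)*(2*π - u)) = -Real.sin ((n:ℝ)*u) := by
  have h : (n:ℝ)*(2*π - u) = (n:ℝ)*(2*π) - (n:ℝ)*u := by ring
  rw [h, Real.sin_sub]
  have hs : Real.sin ((n:ℝ)*(2*π)) = 0 := by
    have := Real.sin_int_mul_pi (2*(n:ℤ))
    push_cast at this
    convert this using 2 ; ring
  have hc : Real.cos ((n:ℝ)*(2*π)) = 1 := by
    have := Real.cos_nat_mul_two_pi n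
    convert this using 2
  rw [hs, hc]
  ring

lemma slF_continuousOn (n : ℕ) :
    ContinuousOn (fun u => slG u * Real.sin (n*u)) (Icc 0 (2*π)) := by
  intro x hx
  rcases eq_or_lt_of_le hx.1 with rfl | hx0
  · rw [ContinuousWithinAt]
    have h0 : slG 0 * Real.sin ((n:ℝ)*0) = 0 := by norm_num
    rw [h0]
    exact slF_tendsto_zero n
  rcases eq_or_lt_of_le hx.2 with hx2 | hx2
  · subst hx2
    rw [ContinuousWithinAt]
    have h0 : slG (2*π) * Real.sin ((n:ℝ)*(2*π)) = 0 := by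
      rw [show Real.sin ((n:ℝ)*(2*π)) = 0 by simpa using sin_nat_reflect n 0]
      ring
    rw [h0]
    have hmap : MapsTo (fun u => 2*π - u) (Icc 0 (2*π)) (Icc 0 (2*π)) := by
      intro u hu
      constructor <;> simp <;> [linarith [hu.2]; linarith [hu.1]]
    have htend : Tendsto (fun u => 2*π - u) (𝓝[Icc 0 (2*π)] (2*π)) (𝓝[Icc 0 (2*π)] 0) := by
      have : ContinuousWithinAt (fun u => 2*π - u) (Icc 0 (2*π)) (2*π) :=
        (continuous_const.sub continuous_id).continuousWithinAt
      have := this.tendsto_nhdsWithin hmap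
      simpa using this
    have hcomp := (slF_tendsto_zero n).comp htend
    have heq : (fun u => slG u * Real.sin ((n:ℝ)*u)) =ᶠ[𝓝[Icc 0 (2*π)] (2*π)]
        (fun u => -((fun v => slG v * Real.sin ((n:ℝ)*v)) ((fun w => 2*π - w) u))) := by
      apply Eventually.of_forall
      intro u
      simp only [Function.comp]
      rw [slG_reflect, sin_nat_reflect]
      ring
    rw [tendsto_congr' heq]
    simpa using hcomp.neg
  · apply ContinuousAt.continuousWithinAt
    apply ContinuousAt.mul ?_ (by fun_prop)
    apply slG_continuousAt
    exact (Real.sin_pos_of_pos_of_lt_pi (by linarith) (by linarith)).ne'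

lemma slG_mul_cont_integrable (h : ℝ → ℝ) (hh : Continuous h) :
    IntervalIntegrable (fun u => slG u * h u) volume 0 (2*π) :=
  slG_intervalIntegrable.mul_continuousOn hh.continuousOn

lemma slP_continuous (n : ℕ) : Continuous (slP n) := by
  unfold slP
  exact continuous_finset_sum _ (fun k _ => by fun_prop)

lemma slG_cos_integral (n : ℕ) (hn : 0 < n) :
    ∫ u in (0:ℝ)..(2*π), slG u * Real.cos (n*u) = -(2*π)/n := by
  have hπ := Real.pi_pos
  set F : ℝ → ℝ := fun u => slG u * Real.sin ((n:ℝ)*u) with hF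
  set f' : ℝ → ℝ := fun u => slP n u + (n:ℝ) * (slG u * Real.cos ((n:ℝ)*u)) with hf'
  have hderiv : ∀ x ∈ Ioo 0 (2*π), HasDerivWithinAt F (f' x) (Ioi x) x := by
    intro x hx
    have hsin : 0 < Real.sin (x/2) :=
      Real.sin_pos_of_pos_of_lt_pi (by linarith [hx.1]) (by linarith [hx.2])
    have h1 : HasDerivAt (fun u : ℝ => Real.sin (u/2)) (Real.cos (x/2) * (1/2)) x :=
      by have h := (Real.hasDerivAt_sin (x/2)).comp x ((hasDerivAt_id' x).div_const 2); exact h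
    have h2 : HasDerivAt (fun u : ℝ => 4 * Real.sin (u/2)^2)
        (4 * ((2:ℕ) * Real.sin (x/2)^1 * (Real.cos (x/2) * (1/2)))) x :=
      (h1.pow 2).const_mul 4
    have hne : 4 * Real.sin (x/2)^2 ≠ 0 := by positivity
    have h3 : HasDerivAt slG
        ((4 * ((2:ℕ) * Real.sin (x/2)^1 * (Real.cos (x/2) * (1/2)))) / (4 * Real.sin (x/2)^2)) x :=
      h2.log hne
    have h4 : HasDerivAt (fun u : ℝ => Real.sin ((n:ℝ)*u)) (Real.cos ((n:ℝ)*x) * ((n:ℝ)*1)) x :=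
      (Real.hasDerivAt_sin ((n:ℝ)*x)).comp x ((hasDerivAt_id x).const_mul (n:ℝ))
    have hFd := h3.mul h4
    apply HasDerivAt.hasDerivWithinAt
    refine hFd.congr_deriv ?_
    have hid := slP_identity n x
    rw [hf']
    field_simp
    have hc : Real.sin (x * n) = Real.sin (n * x) := by rw [mul_comm]
    linear_combination 2 * hid + 2 * Real.cos (x/2) * hc
  have hint1 : IntervalIntegrable (slP n) volume 0 (2*π) :=
    (slP_continuous n).intervalIntegrable 0 (2*π)
  have hint2 : IntervalIntegrable (fun u => slG u * Real.cos ((n:ℝ)*u)) volume 0 (2*π) :=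
    slG_mul_cont_integrable _ (by fun_prop)
  have hint : IntervalIntegrable f' volume 0 (2*π) := by
    rw [hf']
    exact hint1.add (hint2.const_mul _)
  have hFTC := integral_eq_sub_of_hasDeriv_right_of_le (by linarith : (0:ℝ) ≤ 2*π)
    (slF_continuousOn n) hderiv hint
  have hF0 : F 0 = 0 := by
    show slG 0 * Real.sin ((n:ℝ)*0) = 0
    norm_num
  have hF2π : F (2*π) = 0 := by
    show slG (2*π) * Real.sin ((n:ℝ)*(2*π)) = 0
    have := sin_nat_reflect n 0
    simp only [sub_zero, mul_zero, Real.sin_zero, neg_zero] at this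
    rw [this]; ring
  rw [show slG (2*π) * Real.sin ((n:ℝ)*(2*π)) = 0 from hF2π,
    show slG 0 * Real.sin ((n:ℝ)*0) = 0 from hF0, sub_zero] at hFTC
  rw [hf'] at hFTC
  rw [integral_add hint1 (hint2.const_mul _), intervalIntegral.integral_const_mul, integral_slP n hn] at hFTC
  have hn' : (n:ℝ) ≠ 0 := Nat.cast_ne_zero.mpr hn.ne'
  field_simp at hFTC ⊢
  linarith

lemma sin_int_reflect (m : ℤ) (u : ℝ) : Real.sin ((m:ℝ)*(2*π - u)) = -Real.sin ((m:ℝ)*u) := by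
  have h : (m:ℝ)*(2*π - u) = (m:ℝ)*(2*π) - (m:ℝ)*u := by ring
  rw [h, Real.sin_sub]
  have hs : Real.sin ((m:ℝ)*(2*π)) = 0 := by
    have := Real.sin_int_mul_pi (2*m)
    push_cast at this
    convert this using 2 ; ring
  rw [hs, Real.cos_int_mul_two_pi]
  ring

lemma slG_sin_integral (m : ℤ) :
    ∫ u in (0:ℝ)..(2*π), slG u * Real.sin ((m:ℝ)*u) = 0 := by
  have h := integral_comp_sub_left (fun x => slG x * Real.sin ((m:ℝ)*x)) (2*π)
    (a := 0) (b := 2*π)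
  simp only [sub_zero, sub_self] at h
  have heq : ∀ x, slG (2*π - x) * Real.sin ((m:ℝ)*(2*π - x))
      = -(slG x * Real.sin ((m:ℝ)*x)) := by
    intro x
    rw [slG_reflect, sin_int_reflect]
    ring
  simp only [heq] at h
  rw [intervalIntegral.integral_neg] at h
  linarith

lemma slG_cos_integral_int (m : ℤ) (hm : m ≠ 0) :
    ∫ u in (0:ℝ)..(2*π), slG u * Real.cos ((m:ℝ)*u) = -(2*π)/(m.natAbs : ℝ) := by
  have hcos : ∀ u, Real.cos ((m:ℝ)*u) = Real.cos ((m.natAbs:ℝ)*u) := by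
    intro u
    rw [Nat.cast_natAbs, Int.cast_abs]
    rcases abs_cases ((m:ℝ)) with ⟨h, _⟩ | ⟨h, _⟩
    · rw [h]
    · rw [h, show -(m:ℝ)*u = -((m:ℝ)*u) by ring, Real.cos_neg]
  simp only [hcos]
  exact slG_cos_integral m.natAbs (Int.natAbs_pos.mpr hm)

theorem stmt3 (m : ℤ) (hm : m ≠ 0) (t : ℝ) :
    -(1 / (2 * (Real.pi : ℂ))) *
        ∫ ζ in (0:ℝ)..(2 * Real.pi),
          (Real.log (4 * Real.sin ((t - ζ) / 2) ^ 2) : ℂ) *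
            Complex.exp (Complex.I * (m : ℂ) * (ζ : ℂ))
      = (1 / (((|m| : ℤ) : ℝ) : ℂ)) * Complex.exp (Complex.I * (m : ℂ) * (t : ℂ)) := by
  have hπ := Real.pi_pos
  set fC : ℝ → ℂ := fun u => (slG u : ℂ) * Complex.exp (Complex.I * m * ((t:ℂ) - u)) with hfC
  have step1 : (∫ ζ in (0:ℝ)..(2*π),
      (Real.log (4 * Real.sin ((t - ζ) / 2) ^ 2) : ℂ) * Complex.exp (Complex.I * m * ζ))
      = ∫ ζ in (0:ℝ)..(2*π), fC (t - ζ) := by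
    apply intervalIntegral.integral_congr
    intro ζ _
    rw [hfC]
    simp only [slG]
    push_cast
    ring_nf
  rw [step1, integral_comp_sub_left fC t]
  have hper : Function.Periodic fC (2*π) := by
    intro u
    rw [hfC]
    simp only
    rw [slG_periodic u]
    congr 1
    have e : Complex.I * m * ((t:ℂ) - ((u + 2*π : ℝ):ℂ))
        = Complex.I * m * ((t:ℂ) - (u:ℝ)) + (-m) * (2*π*Complex.I) := by
      push_cast; ring
    have e2 := Complex.exp_int_mul_two_pi_mul_I (-m)
    push_cast at e2
    rw [e, Complex.exp_add, e2, mul_one]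
  have hshift := hper.intervalIntegral_add_eq (t - 2*π) 0
  rw [show t - 2*π + (2*π) = t by ring, show (0:ℝ) + 2*π = 2*π by ring] at hshift
  rw [show t - 0 = t by ring, hshift]
  have step4 : (∫ u in (0:ℝ)..(2*π), fC u)
      = Complex.exp (Complex.I * m * t) * ∫ u in (0:ℝ)..(2*π),
          ((slG u * Real.cos ((m:ℝ)*u) : ℝ) : ℂ) + ((-(slG u * Real.sin ((m:ℝ)*u)) : ℝ) : ℂ) * Complex.I := by
    rw [← intervalIntegral.integral_const_mul]
    apply intervalIntegral.integral_congr
    intro u _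
    rw [hfC]
    simp only
    have e1 : Complex.I * m * ((t:ℂ) - u) = Complex.I * m * t + ((-((m:ℝ)*u) : ℝ):ℂ) * Complex.I := by
      push_cast; ring
    rw [e1, Complex.exp_add, Complex.exp_mul_I]
    rw [← Complex.ofReal_cos, ← Complex.ofReal_sin, Real.cos_neg, Real.sin_neg]
    push_cast
    ring
  rw [step4]
  have hintA : IntervalIntegrable (fun u => slG u * Real.cos ((m:ℝ)*u)) volume 0 (2*π) :=
    slG_mul_cont_integrable _ (by fun_prop)
  have hintB : IntervalIntegrable (fun u => -(slG u * Real.sin ((m:ℝ)*u))) volume 0 (2*π) :=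
    (slG_mul_cont_integrable _ (by fun_prop)).neg
  have hintA' : IntervalIntegrable (fun u => ((slG u * Real.cos ((m:ℝ)*u) : ℝ):ℂ)) volume 0 (2*π) :=
    ⟨hintA.1.ofReal, hintA.2.ofReal⟩
  have hintBC : IntervalIntegrable (fun u => ((-(slG u * Real.sin ((m:ℝ)*u)) : ℝ):ℂ)) volume 0 (2*π) :=
    ⟨hintB.1.ofReal, hintB.2.ofReal⟩
  have hintB' := hintBC.mul_const Complex.I
  rw [integral_add hintA' hintB', intervalIntegral.integral_mul_const,
    intervalIntegral.integral_ofReal, intervalIntegral.integral_ofReal]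
  rw [slG_cos_integral_int m hm]
  have hsin0 : (∫ u in (0:ℝ)..(2*π), -(slG u * Real.sin ((m:ℝ)*u))) = 0 := by
    rw [intervalIntegral.integral_neg, slG_sin_integral m]; ring
  rw [hsin0]
  have hnat : ((|m| : ℤ) : ℝ) = (m.natAbs : ℝ) := by
    rw [Nat.cast_natAbs]
  rw [hnat]
  have hn0 : (m.natAbs : ℝ) ≠ 0 := Nat.cast_ne_zero.mpr (Int.natAbs_ne_zero.mpr hm)
  have hπC : ((π:ℝ):ℂ) ≠ 0 := Complex.ofReal_ne_zero.mpr hπ.ne'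
  push_cast
  field_simp
  ring
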